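/- Let I = J₁ ⋯ J_r in R = k[x,y], where J_i is the integral closure of (x^{c_i}, y^{d_i}) for positive integers c_i, d_i, i = 1,...,r, with d₁/c₁ ≥ ⋯ ≥ d_r/c_r. Set a₁ = 0, b_{r+1} = 0, a_i = c₁ + ⋯ + c_{i-1} for i = 2,...,r+1, and b_i = d_i + ⋯ + d_r for i = 1,...,r. Then the Newton boundary of I is the concatenation of segments: B(I) = L₁ ∪ ⋯ ∪ L_r, where L_i is the line segment joining (a_i, b_i) to (a_{i+1}, b_{i+1}). -/

import Mathlib

open MvPolynomial Pointwise

noncomputable section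

/-- `f` is integral over the ideal `I`: it satisfies an equation
`f^n + c₁ f^(n-1) + ⋯ + c_n = 0` with `c_j ∈ I^j`. -/
def IsIntegralOverIdeal {A : Type*} [CommRing A] (I : Ideal A) (f : A) : Prop :=
  ∃ n : ℕ, 0 < n ∧ ∃ c : ℕ → A, (∀ j ∈ Finset.Icc 1 n, c j ∈ I ^ j) ∧
    f ^ n + ∑ j ∈ Finset.Icc 1 n, c j * f ^ (n - j) = 0

/-- `I` is complete (integrally closed): it coincides with its integral closure. -/
def IsCompleteIdeal {A : Type*} [CommRing A] (I : Ideal A) : Prop :=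
  ∀ f, IsIntegralOverIdeal I f ↔ f ∈ I

/-- `J` is the integral closure of the ideal `I`. -/
def IsIntegralClosureOfIdeal {A : Type*} [CommRing A] (J I : Ideal A) : Prop :=
  ∀ f, f ∈ J ↔ IsIntegralOverIdeal I f

/-- A monomial ideal is an ideal generated by monomials. -/
def IsMonomialIdeal {k : Type*} [Field k] {σ : Type*} (I : Ideal (MvPolynomial σ k)) : Prop :=
  ∃ S : Set (σ →₀ ℕ), I = Ideal.span ((fun s => (MvPolynomial.monomial s (1 : k))) '' S)

/-- The Newton polyhedron of a monomial ideal in two variables: the convex hull in `ℝ²`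
of the exponent vectors of the monomials lying in the ideal. -/
def newton {k : Type*} [Field k] (I : Ideal (MvPolynomial (Fin 2) k)) : Set (ℝ × ℝ) :=
  convexHull ℝ {p : ℝ × ℝ |
    ∃ s : Fin 2 →₀ ℕ, (MvPolynomial.monomial s (1 : k)) ∈ I ∧ p = ((s 0 : ℝ), (s 1 : ℝ))}

/-- The Newton boundary: the union of the compact faces (compact extreme subsets)
of the Newton polyhedron. -/
def newtonBoundary {k : Type*} [Field k] (I : Ideal (MvPolynomial (Fin 2) k)) : Set (ℝ × ℝ) :=
  ⋃₀ {F : Set (ℝ × ℝ) | IsExtreme ℝ (newton I) F ∧ IsCompact F}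

/-- The set of lattice points (points of `ℤ²`) of `ℝ × ℝ`. -/
def latticePts : Set (ℝ × ℝ) := {p | ∃ z : ℤ × ℤ, p = ((z.1 : ℝ), (z.2 : ℝ))}

/-- `l_I`: the number of lattice points on the Newton boundary of `I`. -/
def lcount {k : Type*} [Field k] (I : Ideal (MvPolynomial (Fin 2) k)) : ℕ :=
  (newtonBoundary I ∩ latticePts).ncard

/-- `a_I`: the Newton boundary of `I` meets the first coordinate axis in `(a_I, 0)`. -/
def aEnd {k : Type*} [Field k] (I : Ideal (MvPolynomial (Fin 2) k)) : ℝ :=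
  sInf {t : ℝ | (t, 0) ∈ newton I}

/-- `b_I`: the Newton boundary of `I` meets the second coordinate axis in `(0, b_I)`. -/
def bEnd {k : Type*} [Field k] (I : Ideal (MvPolynomial (Fin 2) k)) : ℝ :=
  sInf {t : ℝ | (0, t) ∈ newton I}

/-- `s_I`: the area (two-dimensional Lebesgue measure) of the bounded region
`ℝ₊² \ N(I)`. -/
def sArea {k : Type*} [Field k] (I : Ideal (MvPolynomial (Fin 2) k)) : ℝ :=
  (MeasureTheory.volume ({p : ℝ × ℝ | 0 ≤ p.1 ∧ 0 ≤ p.2} \ newton I)).toReal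

/-- `ℓ(A/I)`: the length of the `A`-module `A ⧸ I`, expressed as the Krull dimension
of its lattice of submodules. -/
def colength {A : Type*} [CommRing A] (I : Ideal A) : WithBot ℕ∞ :=
  Order.krullDim (Submodule A (A ⧸ I))

/-- The maximal homogeneous ideal `𝔪 = (x, y)` of `k[x,y]`. -/
def mxy (k : Type*) [Field k] : Ideal (MvPolynomial (Fin 2) k) :=
  Ideal.span {MvPolynomial.X 0, MvPolynomial.X 1}

/-- An `𝔪`-primary ideal of `k[x,y]`: a primary ideal whose radical is `𝔪 = (x,y)`. -/
def IsMPrimary {k : Type*} [Field k] (I : Ideal (MvPolynomial (Fin 2) k)) : Prop :=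
  I.IsPrimary ∧ I.radical = mxy k

/-- `ℓ(M/N)` for ideals `N ≤ M`: the length of the subquotient module `M ⧸ N`,
expressed as the Krull dimension of its lattice of submodules. -/
def quotLength {A : Type*} [CommRing A] (M N : Ideal A) : WithBot ℕ∞ :=
  Order.krullDim (Submodule A (↥M ⧸ (Submodule.comap M.subtype N)))

/-- The minimal number of generators of an ideal. -/
def minGens {A : Type*} [CommRing A] (I : Ideal A) : ℕ :=
  sInf {n : ℕ | ∃ s : Finset A, s.card = n ∧ Ideal.span (s : Set A) = I}

/-- The rectangle `Q(I) = [0, a_I] × [0, b_I]`. -/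
def Qset {k : Type*} [Field k] (I : Ideal (MvPolynomial (Fin 2) k)) : Set (ℝ × ℝ) :=
  Set.Icc (0 : ℝ) (aEnd I) ×ˢ Set.Icc (0 : ℝ) (bEnd I)

/-- The convex polygon `P(I) = N(I) ∩ Q(I)`, i.e. the polygon bounded by `B(I)` and the
segments joining `(a_I, 0)` and `(0, b_I)` to `(a_I, b_I)`. -/
def Pset {k : Type*} [Field k] (I : Ideal (MvPolynomial (Fin 2) k)) : Set (ℝ × ℝ) :=
  newton I ∩ Qset I

/-- The Minkowski sum of `m` copies of `P` (with the empty sum being `{0}`). -/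
def iterMink (P : Set (ℝ × ℝ)) : ℕ → Set (ℝ × ℝ)
  | 0 => {0}
  | n + 1 => P + iterMink P n

namespace NewtonAux

variable {k : Type*} [Field k]

/-- weight of a monomial exponent: `dd * s 0 + cc * s 1`. -/
def wt (dd cc : ℕ) (s : Fin 2 →₀ ℕ) : ℕ := dd * s 0 + cc * s 1

/-- The algebra map sending `x ↦ x t^dd`, `y ↦ y t^cc`. -/
def Phi (k : Type*) [Field k] (dd cc : ℕ) :
    MvPolynomial (Fin 2) k →ₐ[k] Polynomial (MvPolynomial (Fin 2) k) :=
  MvPolynomial.aeval ![Polynomial.C (MvPolynomial.X 0) * Polynomial.X ^ dd,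
    Polynomial.C (MvPolynomial.X 1) * Polynomial.X ^ cc]

lemma Phi_monomial (dd cc : ℕ) (s : Fin 2 →₀ ℕ) (a : k) :
    Phi k dd cc (MvPolynomial.monomial s a)
      = Polynomial.C (MvPolynomial.monomial s a) * Polynomial.X ^ wt dd cc s := by
  rw [Phi, MvPolynomial.aeval_monomial]
  rw [Finsupp.prod_fintype _ _ (fun i => pow_zero _), Fin.prod_univ_two]
  have hm : (MvPolynomial.monomial s a : MvPolynomial (Fin 2) k)
      = MvPolynomial.C a * (MvPolynomial.X 0 ^ s 0 * MvPolynomial.X 1 ^ s 1) := by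
    rw [MvPolynomial.monomial_eq, Finsupp.prod_fintype _ _ (fun i => pow_zero _),
      Fin.prod_univ_two]
  have halg : (algebraMap k (Polynomial (MvPolynomial (Fin 2) k))) a
      = Polynomial.C (MvPolynomial.C a) := by
    rw [Polynomial.algebraMap_apply, MvPolynomial.algebraMap_eq]
  simp only [Matrix.cons_val_zero, Matrix.cons_val_one, Matrix.head_cons, halg, hm, wt]
  rw [mul_pow, mul_pow, ← Polynomial.C_pow, ← Polynomial.C_pow, ← pow_mul, ← pow_mul,
    pow_add]
  simp only [map_mul]
  ring

section PartA

lemma coeff_Phi (dd cc : ℕ) (f : MvPolynomial (Fin 2) k) (s : Fin 2 →₀ ℕ) :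
    MvPolynomial.coeff s ((Phi k dd cc f).coeff (wt dd cc s)) = MvPolynomial.coeff s f := by
  conv_lhs => rw [f.as_sum, map_sum, Polynomial.finset_sum_coeff]
  rw [MvPolynomial.coeff_sum]
  rw [Finset.sum_eq_single s]
  · simp [Phi_monomial, Polynomial.C_mul_X_pow_eq_monomial, Polynomial.coeff_monomial,
      MvPolynomial.coeff_monomial]
  · intro v _ hvs
    simp [Phi_monomial, Polynomial.C_mul_X_pow_eq_monomial, Polynomial.coeff_monomial,
      MvPolynomial.coeff_monomial, apply_ite (MvPolynomial.coeff s), hvs]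
  · intro hs
    simp [MvPolynomial.notMem_support_iff.mp hs]

lemma Phi_ne_zero {dd cc : ℕ} {f : MvPolynomial (Fin 2) k} (hf : f ≠ 0) :
    Phi k dd cc f ≠ 0 := by
  obtain ⟨s, hs⟩ := MvPolynomial.ne_zero_iff.mp hf
  intro h0
  apply hs
  rw [← coeff_Phi dd cc f s, h0]
  simp

lemma trailingDegree_Phi_le {dd cc : ℕ} {f : MvPolynomial (Fin 2) k} {s : Fin 2 →₀ ℕ}
    (hs : s ∈ f.support) : (Phi k dd cc f).trailingDegree ≤ (wt dd cc s : ℕ∞) := by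
  apply Polynomial.trailingDegree_le_of_ne_zero (n := wt dd cc s)
  intro h0
  apply MvPolynomial.mem_support_iff.mp hs
  rw [← coeff_Phi dd cc f s, h0, MvPolynomial.coeff_zero]

lemma le_trailingDegree_of_coeff {A : Type*} [Semiring A] {p : Polynomial A} {m : ℕ}
    (h : ∀ n : ℕ, n < m → p.coeff n = 0) : (m : ℕ∞) ≤ p.trailingDegree := by
  rcases eq_or_ne p 0 with rfl | hp
  · rw [Polynomial.trailingDegree_zero]; exact le_top
  rw [Polynomial.trailingDegree_eq_natTrailingDegree hp, Nat.cast_le]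
  by_contra hlt
  push_neg at hlt
  exact Polynomial.trailingCoeff_nonzero_iff_nonzero.mpr hp (h _ hlt)

lemma le_trailingDegree_Phi {dd cc m : ℕ} {f : MvPolynomial (Fin 2) k}
    (h : ∀ s ∈ f.support, m ≤ wt dd cc s) :
    (m : ℕ∞) ≤ (Phi k dd cc f).trailingDegree := by
  apply le_trailingDegree_of_coeff
  intro n hn
  conv_lhs => rw [f.as_sum, map_sum, Polynomial.finset_sum_coeff]
  apply Finset.sum_eq_zero
  intro v hv
  rw [Phi_monomial, Polynomial.C_mul_X_pow_eq_monomial, Polynomial.coeff_monomial, if_neg]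
  intro e
  have := h v hv
  omega

/-- The ideal of `f` with `Φ f` of trailing degree at least `m`. -/
def Vdeal (k : Type*) [Field k] (dd cc m : ℕ) : Ideal (MvPolynomial (Fin 2) k) where
  carrier := {f | (m : ℕ∞) ≤ (Phi k dd cc f).trailingDegree}
  zero_mem' := by
    simp only [Set.mem_setOf_eq, map_zero, Polynomial.trailingDegree_zero]; exact le_top
  add_mem' := by
    intro f g hf hg
    simp only [Set.mem_setOf_eq, map_add] at *
    apply le_trailingDegree_of_coeff
    intro n hn
    have hn' : (n : ℕ∞) < m := Nat.cast_lt.mpr hn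
    rw [Polynomial.coeff_add,
      Polynomial.coeff_eq_zero_of_lt_trailingDegree (lt_of_lt_of_le hn' hf),
      Polynomial.coeff_eq_zero_of_lt_trailingDegree (lt_of_lt_of_le hn' hg), add_zero]
  smul_mem' := by
    intro r f hf
    simp only [Set.mem_setOf_eq, smul_eq_mul, map_mul] at *
    calc (m : ℕ∞) ≤ (Phi k dd cc f).trailingDegree := hf
    _ ≤ (Phi k dd cc r).trailingDegree + (Phi k dd cc f).trailingDegree := le_add_self
    _ ≤ _ := Polynomial.le_trailingDegree_mul

lemma mem_Vdeal {dd cc m : ℕ} {f : MvPolynomial (Fin 2) k} :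
    f ∈ Vdeal k dd cc m ↔ (m : ℕ∞) ≤ (Phi k dd cc f).trailingDegree := Iff.rfl

lemma span_le_V (cc dd : ℕ) :
    Ideal.span {(MvPolynomial.X 0 : MvPolynomial (Fin 2) k) ^ cc, MvPolynomial.X 1 ^ dd}
      ≤ Vdeal k dd cc (cc * dd) := by
  rw [Ideal.span_le]
  rintro p (rfl | rfl)
  · rw [SetLike.mem_coe, mem_Vdeal, MvPolynomial.X_pow_eq_monomial, Phi_monomial]
    have : wt dd cc (Finsupp.single 0 cc) = cc * dd := by
      simp [wt, Finsupp.single_apply, mul_comm]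
    rw [← this]
    exact Polynomial.le_trailingDegree_C_mul_X_pow _ _
  · rw [SetLike.mem_coe, mem_Vdeal, MvPolynomial.X_pow_eq_monomial, Phi_monomial]
    have : wt dd cc (Finsupp.single 1 dd) = cc * dd := by
      simp [wt, Finsupp.single_apply]
    rw [← this]
    exact Polynomial.le_trailingDegree_C_mul_X_pow _ _

lemma pow_le_V (cc dd n : ℕ) :
    (Ideal.span {(MvPolynomial.X 0 : MvPolynomial (Fin 2) k) ^ cc, MvPolynomial.X 1 ^ dd}) ^ n
      ≤ Vdeal k dd cc (n * (cc * dd)) := by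
  induction n with
  | zero =>
    intro f _
    rw [mem_Vdeal]
    simp
  | succ n ih =>
    rw [pow_succ]
    apply Ideal.mul_le.mpr
    intro p hp q hq
    have h1 := ih hp
    have h2 := span_le_V cc dd hq
    rw [mem_Vdeal] at h1 h2 ⊢
    rw [map_mul]
    calc (((n+1) * (cc*dd) : ℕ) : ℕ∞) = ((n * (cc*dd) : ℕ) : ℕ∞) + ((cc*dd : ℕ) : ℕ∞) := by
          push_cast; ring
    _ ≤ (Phi k dd cc p).trailingDegree + (Phi k dd cc q).trailingDegree := add_le_add h1 h2
    _ ≤ _ := Polynomial.le_trailingDegree_mul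

end PartA

theorem integral_support_wt {cc dd : ℕ} (hcc : 0 < cc) (hdd : 0 < dd)
    {f : MvPolynomial (Fin 2) k}
    (hf : IsIntegralOverIdeal
      (Ideal.span {(MvPolynomial.X 0 : MvPolynomial (Fin 2) k) ^ cc, MvPolynomial.X 1 ^ dd}) f)
    {s : Fin 2 →₀ ℕ} (hs : s ∈ f.support) : cc * dd ≤ wt dd cc s := by
  rcases eq_or_ne f 0 with rfl | hf0
  · simp at hs
  obtain ⟨n, hn, cf, hcf, heq⟩ := hf
  set t := (Phi k dd cc f).natTrailingDegree with ht
  have htd : (Phi k dd cc f).trailingDegree = (t : ℕ∞) :=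
    Polynomial.trailingDegree_eq_natTrailingDegree (Phi_ne_zero hf0)
  have key : cc * dd ≤ t := by
    by_contra hlt
    push_neg at hlt
    have hpow : ∀ m : ℕ, ((Phi k dd cc f) ^ m).trailingDegree = ((m * t : ℕ) : ℕ∞) := by
      intro m
      induction m with
      | zero => simpa using Polynomial.trailingDegree_one
      | succ m ih =>
        rw [pow_succ, Polynomial.trailingDegree_mul, ih, htd]
        push_cast
        ring
    have hterm : ∀ j ∈ Finset.Icc 1 n,
        ((n * t + 1 : ℕ) : ℕ∞) ≤ (Phi k dd cc (cf j * f ^ (n - j))).trailingDegree := by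
      intro j hj
      have hj' := Finset.mem_Icc.mp hj
      have h1 : ((j * (cc * dd) : ℕ) : ℕ∞) ≤ (Phi k dd cc (cf j)).trailingDegree :=
        pow_le_V cc dd j (hcf j hj)
      have h2 : (Phi k dd cc (f ^ (n - j))).trailingDegree = (((n - j) * t : ℕ) : ℕ∞) := by
        rw [map_pow, hpow]
      have hnat : n * t + 1 ≤ j * (cc * dd) + (n - j) * t := by
        have e1 : j * (t + 1) ≤ j * (cc * dd) := Nat.mul_le_mul_left _ hlt
        have e2 : (n - j) * t + j * t = n * t := by
          rw [← Nat.add_mul]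
          congr 1
          omega
        calc n * t + 1 = (n - j) * t + j * t + 1 := by rw [e2]
        _ ≤ (n - j) * t + j * (t + 1) := by rw [Nat.mul_add, Nat.mul_one]; omega
        _ ≤ (n - j) * t + j * (cc * dd) := by omega
        _ = j * (cc * dd) + (n - j) * t := by ring
      calc ((n * t + 1 : ℕ) : ℕ∞) ≤ ((j * (cc * dd) + (n - j) * t : ℕ) : ℕ∞) :=
            Nat.cast_le.mpr hnat
      _ = ((j * (cc * dd) : ℕ) : ℕ∞) + (((n - j) * t : ℕ) : ℕ∞) := by push_cast; ring
      _ ≤ (Phi k dd cc (cf j)).trailingDegree + (Phi k dd cc (f ^ (n - j))).trailingDegree := by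
            rw [h2]; exact add_le_add h1 le_rfl
      _ ≤ _ := by rw [map_mul]; exact Polynomial.le_trailingDegree_mul
    have hsum : ((n * t + 1 : ℕ) : ℕ∞)
        ≤ (Phi k dd cc (∑ j ∈ Finset.Icc 1 n, cf j * f ^ (n - j))).trailingDegree := by
      apply le_trailingDegree_of_coeff
      intro m hm
      rw [map_sum, Polynomial.finset_sum_coeff]
      apply Finset.sum_eq_zero
      intro j hj
      exact Polynomial.coeff_eq_zero_of_lt_trailingDegree
        (lt_of_lt_of_le (Nat.cast_lt.mpr hm) (hterm j hj))
    have hfn : f ^ n = -∑ j ∈ Finset.Icc 1 n, cf j * f ^ (n - j) :=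
      eq_neg_of_add_eq_zero_left heq
    have hmain : ((n * t : ℕ) : ℕ∞) = (Phi k dd cc (f ^ n)).trailingDegree := by
      rw [map_pow, hpow]
    rw [hfn, map_neg, Polynomial.trailingDegree_neg] at hmain
    rw [← hmain] at hsum
    have := Nat.cast_le.mp hsum
    omega
  have h2 := trailingDegree_Phi_le (dd := dd) (cc := cc) hs
  rw [htd, Nat.cast_le] at h2
  omega

theorem monomial_integral {cc dd : ℕ} (hcc : 0 < cc) (hdd : 0 < dd) {s : Fin 2 →₀ ℕ}
    (hs : cc * dd ≤ wt dd cc s) :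
    IsIntegralOverIdeal
      (Ideal.span {(MvPolynomial.X 0 : MvPolynomial (Fin 2) k) ^ cc, MvPolynomial.X 1 ^ dd})
      (MvPolynomial.monomial s (1 : k)) := by
  set I := Ideal.span {(MvPolynomial.X 0 : MvPolynomial (Fin 2) k) ^ cc, MvPolynomial.X 1 ^ dd}
    with hI
  have hx0 : (MvPolynomial.X 0 : MvPolynomial (Fin 2) k) ^ cc ∈ I := by
    rw [hI]; exact Ideal.subset_span (by simp)
  have hx1 : (MvPolynomial.X 1 : MvPolynomial (Fin 2) k) ^ dd ∈ I := by
    rw [hI]; exact Ideal.subset_span (by simp)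
  have hn : 0 < cc * dd := Nat.mul_pos hcc hdd
  have hmem : (MvPolynomial.monomial s (1:k)) ^ (cc*dd) ∈ I ^ (cc*dd) := by
    have hA : cc * dd ≤ dd * s 0 + cc * s 1 := hs
    obtain ⟨u, v, huv, hu', hv'⟩ :
        ∃ u v : ℕ, u + v = cc * dd ∧ u ≤ dd * s 0 ∧ v ≤ cc * s 1 :=
      ⟨min (dd * s 0) (cc * dd), cc * dd - min (dd * s 0) (cc * dd), by omega, by omega, by omega⟩
    have hcu : cc * u ≤ (cc * dd) * s 0 := by
      calc cc * u ≤ cc * (dd * s 0) := Nat.mul_le_mul_left _ hu'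
      _ = (cc * dd) * s 0 := by ring
    have hdv : dd * v ≤ (cc * dd) * s 1 := by
      calc dd * v ≤ dd * (cc * s 1) := Nat.mul_le_mul_left _ hv'
      _ = (cc * dd) * s 1 := by ring
    have hx : ((MvPolynomial.X 0 : MvPolynomial (Fin 2) k) ^ cc) ^ u
        * ((MvPolynomial.X 1 : MvPolynomial (Fin 2) k) ^ dd) ^ v ∈ I ^ (cc * dd) := by
      have := Ideal.mul_mem_mul (Ideal.pow_mem_pow hx0 u) (Ideal.pow_mem_pow hx1 v)
      rwa [← pow_add, huv] at this
    have heqm : (((MvPolynomial.X 0 : MvPolynomial (Fin 2) k) ^ cc) ^ u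
        * ((MvPolynomial.X 1 : MvPolynomial (Fin 2) k) ^ dd) ^ v)
        * MvPolynomial.monomial
            (Finsupp.single 0 ((cc * dd) * s 0 - cc * u)
              + Finsupp.single 1 ((cc * dd) * s 1 - dd * v)) (1 : k)
        = (MvPolynomial.monomial s (1:k)) ^ (cc * dd) := by
      rw [MvPolynomial.monomial_pow, one_pow, ← pow_mul, ← pow_mul,
        MvPolynomial.X_pow_eq_monomial, MvPolynomial.X_pow_eq_monomial,
        MvPolynomial.monomial_mul, MvPolynomial.monomial_mul, one_mul, one_mul]
      have hfe : Finsupp.single (0 : Fin 2) (cc * u) + Finsupp.single (1 : Fin 2) (dd * v)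
          + (Finsupp.single (0 : Fin 2) ((cc * dd) * s 0 - cc * u)
            + Finsupp.single (1 : Fin 2) ((cc * dd) * s 1 - dd * v)) = (cc * dd) • s := by
        ext i
        fin_cases i <;>
          simp [Finsupp.single_apply, Finsupp.smul_apply] <;> omega
      rw [hfe]
    rw [← heqm]
    exact Ideal.mul_mem_right _ _ hx
  refine ⟨cc * dd, hn,
    fun j => if j = cc * dd then -(MvPolynomial.monomial s (1:k)) ^ (cc*dd) else 0, ?_, ?_⟩
  · intro j hj
    dsimp only
    split_ifs with h
    · subst h
      exact neg_mem hmem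
    · exact zero_mem _
  · rw [Finset.sum_eq_single (cc*dd)]
    · dsimp only
      rw [if_pos rfl, Nat.sub_self, pow_zero, mul_one]
      ring
    · intro j _ hj
      dsimp only
      rw [if_neg hj, zero_mul]
    · intro h
      exact absurd (Finset.mem_Icc.mpr ⟨hn, le_rfl⟩) h

theorem J_eq {cc dd : ℕ} (hcc : 0 < cc) (hdd : 0 < dd) {J : Ideal (MvPolynomial (Fin 2) k)}
    (hJ : IsIntegralClosureOfIdeal J
      (Ideal.span {(MvPolynomial.X 0 : MvPolynomial (Fin 2) k) ^ cc, MvPolynomial.X 1 ^ dd})) :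
    J = Ideal.span ((fun s => MvPolynomial.monomial s (1 : k)) ''
      {s : Fin 2 →₀ ℕ | cc * dd ≤ wt dd cc s}) := by
  apply le_antisymm
  · intro f hf
    rw [MvPolynomial.mem_ideal_span_monomial_image]
    intro s hs
    exact ⟨s, integral_support_wt hcc hdd ((hJ f).mp hf) hs, le_rfl⟩
  · rw [Ideal.span_le]
    rintro p ⟨s, hsS, rfl⟩
    exact SetLike.mem_coe.mpr ((hJ _).mpr (monomial_integral hcc hdd hsS))


section PartB
variable {k : Type*} [Field k]

lemma span_mono_mul (A B : Set (Fin 2 →₀ ℕ)) :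
    Ideal.span ((fun s => MvPolynomial.monomial s (1 : k)) '' A)
      * Ideal.span ((fun s => MvPolynomial.monomial s (1 : k)) '' B)
    = Ideal.span ((fun s => MvPolynomial.monomial s (1 : k)) '' (A + B)) := by
  rw [Ideal.span_mul_span']
  congr 1
  ext p
  constructor
  · rintro ⟨x, ⟨sa, hsa, rfl⟩, y, ⟨sb, hsb, rfl⟩, rfl⟩
    exact ⟨sa + sb, Set.add_mem_add hsa hsb, by simp [MvPolynomial.monomial_mul]⟩
  · rintro ⟨sc, ⟨sa, hsa, sb, hsb, rfl⟩, rfl⟩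
    exact ⟨_, ⟨sa, hsa, rfl⟩, _, ⟨sb, hsb, rfl⟩, by simp [MvPolynomial.monomial_mul]⟩

lemma prod_span_mono {r : ℕ} (S : Fin r → Set (Fin 2 →₀ ℕ)) :
    ∏ i : Fin r, Ideal.span ((fun s => MvPolynomial.monomial s (1 : k)) '' S i)
      = Ideal.span ((fun s => MvPolynomial.monomial s (1 : k)) '' (∑ i : Fin r, S i)) := by
  have main : ∀ F : Finset (Fin r),
      ∏ i ∈ F, Ideal.span ((fun s => MvPolynomial.monomial s (1 : k)) '' S i)
        = Ideal.span ((fun s => MvPolynomial.monomial s (1 : k)) '' (∑ i ∈ F, S i)) := by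
    intro F
    induction F using Finset.cons_induction with
    | empty =>
      rw [Finset.prod_empty, Finset.sum_empty]
      have h0 : ((fun s => MvPolynomial.monomial s (1 : k)) '' (0 : Set (Fin 2 →₀ ℕ))) = {1} := by
        have : (0 : Set (Fin 2 →₀ ℕ)) = {0} := rfl
        rw [this, Set.image_singleton]
        simp
      rw [h0, Ideal.span_singleton_one]
      exact Ideal.one_eq_top
    | cons a F ha ih =>
      rw [Finset.prod_cons, Finset.sum_cons, ih, span_mono_mul]
  exact main Finset.univ

lemma wt_cross_bound {r : ℕ} (c d : Fin r → ℕ) (hc : ∀ i, 0 < c i) (hd : ∀ i, 0 < d i)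
    (hsort : ∀ i j : Fin r, i ≤ j → d j * c i ≤ d i * c j) (i j : Fin r) (σ : Fin 2 →₀ ℕ)
    (hσ : c i * d i ≤ d i * σ 0 + c i * σ 1) :
    (if (i : ℕ) < (j : ℕ) then d j * c i else c j * d i) ≤ d j * σ 0 + c j * σ 1 := by
  split_ifs with h
  · have hij : i ≤ j := by rw [Fin.le_def]; omega
    have hso : d j * c i ≤ d i * c j := hsort i j hij
    have key : d i * (d j * c i) ≤ d i * (d j * σ 0 + c j * σ 1) := by
      calc d i * (d j * c i) = d j * (c i * d i) := by ring
      _ ≤ d j * (d i * σ 0 + c i * σ 1) := Nat.mul_le_mul_left _ hσ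
      _ = d i * d j * σ 0 + (d j * c i) * σ 1 := by ring
      _ ≤ d i * d j * σ 0 + (d i * c j) * σ 1 :=
          Nat.add_le_add_left (Nat.mul_le_mul_right _ hso) _
      _ = d i * (d j * σ 0 + c j * σ 1) := by ring
    exact Nat.le_of_mul_le_mul_left key (hd i)
  · have hji : j ≤ i := by
      rw [Fin.le_def]
      omega
    have hso : d i * c j ≤ d j * c i := hsort j i hji
    have key : c i * (c j * d i) ≤ c i * (d j * σ 0 + c j * σ 1) := by
      calc c i * (c j * d i) = c j * (c i * d i) := by ring
      _ ≤ c j * (d i * σ 0 + c i * σ 1) := Nat.mul_le_mul_left _ hσ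
      _ = (d i * c j) * σ 0 + c i * c j * σ 1 := by ring
      _ ≤ (d j * c i) * σ 0 + c i * c j * σ 1 :=
          Nat.add_le_add_right (Nat.mul_le_mul_right _ hso) _
      _ = c i * (d j * σ 0 + c j * σ 1) := by ring
    exact Nat.le_of_mul_le_mul_left key (hc i)

end PartB


section Geo
variable (r : ℕ) (c d : Fin r → ℕ)

/-- extension of `c : Fin r → ℕ` to `ℕ → ℝ` by zero. -/
def ext2 (f : Fin r → ℕ) : ℕ → ℝ := fun n => if h : n < r then (f ⟨n, h⟩ : ℝ) else 0

def alphaf : ℕ → ℝ := fun t => ∑ n ∈ Finset.range t, ext2 r c n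

def betaf : ℕ → ℝ := fun t => ∑ n ∈ Finset.Ico t r, ext2 r d n

def vtx : ℕ → ℝ × ℝ := fun m => (alphaf r c m, betaf r d m)

def Eline (j : Fin r) : ℝ := (d j : ℝ) * alphaf r c j + (c j : ℝ) * betaf r d j

def Hset : Set (ℝ × ℝ) :=
  {p | 0 ≤ p.1 ∧ 0 ≤ p.2 ∧ ∀ j : Fin r, Eline r c d j ≤ (d j : ℝ) * p.1 + (c j : ℝ) * p.2}

variable {r c d}

lemma ext2_nonneg (f : Fin r → ℕ) (n : ℕ) : 0 ≤ ext2 r f n := by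
  unfold ext2
  split <;> positivity

lemma ext2_pos (f : Fin r → ℕ) (hf : ∀ i, 0 < f i) {n : ℕ} (hn : n < r) : 0 < ext2 r f n := by
  unfold ext2
  rw [dif_pos hn]
  exact_mod_cast hf _

lemma alphaf_zero : alphaf r c 0 = 0 := by simp [alphaf]

lemma betaf_last : betaf r d r = 0 := by simp [betaf]

lemma alphaf_nonneg (t : ℕ) : 0 ≤ alphaf r c t :=
  Finset.sum_nonneg fun n _ => ext2_nonneg c n

lemma betaf_nonneg (t : ℕ) : 0 ≤ betaf r d t :=
  Finset.sum_nonneg fun n _ => ext2_nonneg d n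

lemma alphaf_succ {n : ℕ} (h : n < r) :
    alphaf r c (n + 1) = alphaf r c n + (c ⟨n, h⟩ : ℝ) := by
  unfold alphaf
  rw [Finset.sum_range_succ]
  congr 1
  unfold ext2
  rw [dif_pos h]

lemma betaf_succ {n : ℕ} (h : n < r) :
    betaf r d n = (d ⟨n, h⟩ : ℝ) + betaf r d (n + 1) := by
  unfold betaf
  rw [Finset.sum_eq_sum_Ico_succ_bot h]
  congr 1
  unfold ext2
  rw [dif_pos h]

lemma alphaf_split {j m : ℕ} (hjm : j ≤ m) :
    alphaf r c m = alphaf r c j + ∑ n ∈ Finset.Ico j m, ext2 r c n := by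
  unfold alphaf
  rw [Finset.range_eq_Ico, ← Finset.sum_Ico_consecutive _ (Nat.zero_le j) hjm]
  rw [Finset.range_eq_Ico]

lemma betaf_split {j m : ℕ} (hjm : j ≤ m) (hmr : m ≤ r) :
    betaf r d j = (∑ n ∈ Finset.Ico j m, ext2 r d n) + betaf r d m := by
  unfold betaf
  rw [← Finset.sum_Ico_consecutive _ hjm hmr]

lemma alphaf_strict_mono {n : ℕ} (hc : ∀ i, 0 < c i) (hn : n < r) :
    alphaf r c n < alphaf r c (n + 1) := by
  rw [alphaf_succ hn]
  have : (0 : ℝ) < (c ⟨n, hn⟩ : ℝ) := by exact_mod_cast hc _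
  linarith

lemma Eline_succ (j : Fin r) :
    (d j : ℝ) * alphaf r c ((j : ℕ) + 1) + (c j : ℝ) * betaf r d ((j : ℕ) + 1)
      = Eline r c d j := by
  rw [Eline, alphaf_succ (c := c) j.isLt, betaf_succ (d := d) j.isLt]
  simp only [Fin.eta]
  ring

lemma vertex_ge (hsort : ∀ i j : Fin r, i ≤ j → d j * c i ≤ d i * c j) (j : Fin r)
    {m : ℕ} (hm : m ≤ r) :
    Eline r c d j ≤ (d j : ℝ) * alphaf r c m + (c j : ℝ) * betaf r d m := by
  rcases le_or_gt (j : ℕ) m with hjm | hmj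
  · have hab := alphaf_split (c := c) hjm
    have hba := betaf_split (d := d) hjm hm
    have key : (c j : ℝ) * ∑ n ∈ Finset.Ico (j : ℕ) m, ext2 r d n
        ≤ (d j : ℝ) * ∑ n ∈ Finset.Ico (j : ℕ) m, ext2 r c n := by
      rw [Finset.mul_sum, Finset.mul_sum]
      apply Finset.sum_le_sum
      intro n hn
      rw [Finset.mem_Ico] at hn
      have hnr : n < r := lt_of_lt_of_le hn.2 hm
      unfold ext2
      rw [dif_pos hnr, dif_pos hnr]
      calc (c j : ℝ) * (d ⟨n, hnr⟩ : ℝ) = ((d ⟨n, hnr⟩ * c j : ℕ) : ℝ) := by push_cast; ring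
      _ ≤ ((d j * c ⟨n, hnr⟩ : ℕ) : ℝ) := by
            exact_mod_cast hsort j ⟨n, hnr⟩ (by rw [Fin.le_def]; exact hn.1)
      _ = (d j : ℝ) * (c ⟨n, hnr⟩ : ℝ) := by push_cast; ring
    rw [Eline, hab, hba]
    ring_nf
    ring_nf at key
    linarith
  · have hab := alphaf_split (c := c) (le_of_lt hmj)
    have hba := betaf_split (d := d) (le_of_lt hmj) j.isLt.le
    have key : (d j : ℝ) * ∑ n ∈ Finset.Ico m (j : ℕ), ext2 r c n
        ≤ (c j : ℝ) * ∑ n ∈ Finset.Ico m (j : ℕ), ext2 r d n := by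
      rw [Finset.mul_sum, Finset.mul_sum]
      apply Finset.sum_le_sum
      intro n hn
      rw [Finset.mem_Ico] at hn
      have hnr : n < r := lt_of_lt_of_le hn.2 j.isLt.le
      unfold ext2
      rw [dif_pos hnr, dif_pos hnr]
      calc (d j : ℝ) * (c ⟨n, hnr⟩ : ℝ) = ((d j * c ⟨n, hnr⟩ : ℕ) : ℝ) := by push_cast; ring
      _ ≤ ((d ⟨n, hnr⟩ * c j : ℕ) : ℝ) := by
            exact_mod_cast hsort ⟨n, hnr⟩ j (by rw [Fin.le_def]; exact hn.2.le)
      _ = (c j : ℝ) * (d ⟨n, hnr⟩ : ℝ) := by push_cast; ring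
    rw [Eline, hab, hba]
    ring_nf
    ring_nf at key
    linarith

end Geo


section Geo2
variable {r : ℕ} {c d : Fin r → ℕ}

lemma convex_H : Convex ℝ (Hset r c d) := by
  intro x hx y hy a b ha hb hab
  obtain ⟨hx1, hx2, hx3⟩ := hx
  obtain ⟨hy1, hy2, hy3⟩ := hy
  have hfst : (a • x + b • y).1 = a * x.1 + b * y.1 := rfl
  have hsnd : (a • x + b • y).2 = a * x.2 + b * y.2 := rfl
  refine ⟨?_, ?_, ?_⟩
  · rw [hfst]; positivity
  · rw [hsnd]; positivity
  · intro j
    rw [hfst, hsnd]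
    have t1 := mul_le_mul_of_nonneg_left (hx3 j) ha
    have t2 := mul_le_mul_of_nonneg_left (hy3 j) hb
    have hE : a * Eline r c d j + b * Eline r c d j = Eline r c d j := by
      linear_combination (Eline r c d j) * hab
    nlinarith [t1, t2, hE]

lemma closed_H : IsClosed (Hset r c d) := by
  have heq : Hset r c d = {p : ℝ × ℝ | 0 ≤ p.1} ∩ ({p : ℝ × ℝ | 0 ≤ p.2} ∩
      ⋂ j : Fin r, {p : ℝ × ℝ | Eline r c d j ≤ (d j : ℝ) * p.1 + (c j : ℝ) * p.2}) := by
    ext p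
    simp only [Hset, Set.mem_setOf_eq, Set.mem_inter_iff, Set.mem_iInter]
  rw [heq]
  refine (isClosed_le continuous_const continuous_fst).inter
    ((isClosed_le continuous_const continuous_snd).inter (isClosed_iInter fun j => ?_))
  exact isClosed_le continuous_const
    ((continuous_const.mul continuous_fst).add (continuous_const.mul continuous_snd))

lemma mem_segment_param {u v : ℝ × ℝ} {t : ℝ} (h0 : 0 ≤ t) (h1 : t ≤ 1) :
    ((1 - t) * u.1 + t * v.1, (1 - t) * u.2 + t * v.2) ∈ segment ℝ u v := by
  refine ⟨1 - t, t, by linarith, h0, by ring, ?_⟩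
  apply Prod.ext <;> simp [Prod.smul_def, smul_eq_mul]

lemma segment_translate {u v q z : ℝ × ℝ} (h : q ∈ segment ℝ u v) :
    q + z ∈ segment ℝ (u + z) (v + z) := by
  obtain ⟨a, b, ha, hb, hab, rfl⟩ := h
  refine ⟨a, b, ha, hb, hab, ?_⟩
  have h1 : a • (u + z) + b • (v + z) = (a • u + b • v) + (a + b) • z := by
    apply Prod.ext <;> simp [Prod.smul_def, smul_eq_mul] <;> ring
  rw [h1, hab, one_smul]

lemma exists_between (hc : ∀ i, 0 < c i) {x : ℝ} (hx0 : 0 ≤ x) :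
    ∀ m : ℕ, m ≤ r → x < alphaf r c m →
      ∃ i : ℕ, i < m ∧ alphaf r c i ≤ x ∧ x < alphaf r c (i + 1) := by
  intro m
  induction m with
  | zero =>
    intro _ h
    rw [alphaf_zero] at h
    linarith
  | succ m ih =>
    intro hm h
    by_cases hx : alphaf r c m ≤ x
    · exact ⟨m, Nat.lt_succ_self m, hx, h⟩
    · push_neg at hx
      obtain ⟨i, h1, h2, h3⟩ := ih (le_trans (Nat.le_succ m) hm) hx
      exact ⟨i, Nat.lt_succ_of_lt h1, h2, h3⟩

lemma vtx_mem_H (hsort : ∀ i j : Fin r, i ≤ j → d j * c i ≤ d i * c j) {m : ℕ} (hm : m ≤ r) :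
    vtx r c d m ∈ Hset r c d :=
  ⟨alphaf_nonneg m, betaf_nonneg m, fun j => vertex_ge hsort j hm⟩

lemma segment_subset_H (hsort : ∀ i j : Fin r, i ≤ j → d j * c i ≤ d i * c j)
    {m m' : ℕ} (hm : m ≤ r) (hm' : m' ≤ r) :
    segment ℝ (vtx r c d m) (vtx r c d m') ⊆ Hset r c d :=
  convex_H.segment_subset (vtx_mem_H hsort hm) (vtx_mem_H hsort hm')

/-- Decomposition: every point of `H` is a vertical/horizontal translate of a point on
one of the boundary segments. -/
lemma decomp (hr : 0 < r) (hc : ∀ i, 0 < c i)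
    {p : ℝ × ℝ} (hp : p ∈ Hset r c d) :
    ∃ i : Fin r, ∃ q ∈ segment ℝ (vtx r c d i) (vtx r c d ((i : ℕ) + 1)),
      ∃ sh : ℝ × ℝ, 0 ≤ sh.1 ∧ 0 ≤ sh.2 ∧ p = q + sh := by
  obtain ⟨hp1, hp2, hp3⟩ := hp
  rcases lt_or_ge p.1 (alphaf r c r) with hcase | hcase
  · obtain ⟨i, hir, hi1, hi2⟩ := exists_between hc hp1 r le_rfl hcase
    set ii : Fin r := ⟨i, hir⟩ with hii
    have hci : (0 : ℝ) < (c ii : ℝ) := by exact_mod_cast hc ii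
    have hstep : alphaf r c (i + 1) = alphaf r c i + (c ii : ℝ) := alphaf_succ hir
    set t : ℝ := (p.1 - alphaf r c i) / (c ii : ℝ) with htdef
    have ht0 : 0 ≤ t := div_nonneg (by linarith) hci.le
    have ht1 : t ≤ 1 := by
      rw [div_le_one hci]
      have : p.1 < alphaf r c i + (c ii : ℝ) := by rw [← hstep]; exact hi2
      linarith
    set q : ℝ × ℝ := ((1 - t) * (vtx r c d i).1 + t * (vtx r c d (i + 1)).1,
      (1 - t) * (vtx r c d i).2 + t * (vtx r c d (i + 1)).2) with hq
    have hqseg : q ∈ segment ℝ (vtx r c d i) (vtx r c d (i + 1)) := mem_segment_param ht0 ht1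
    have hq1 : q.1 = p.1 := by
      show (1 - t) * alphaf r c i + t * alphaf r c (i + 1) = p.1
      rw [hstep, htdef]
      field_simp
      ring
    have hEq : (d ii : ℝ) * q.1 + (c ii : ℝ) * q.2 = Eline r c d ii := by
      show (d ii : ℝ) * ((1 - t) * alphaf r c i + t * alphaf r c (i + 1))
        + (c ii : ℝ) * ((1 - t) * betaf r d i + t * betaf r d (i + 1)) = Eline r c d ii
      have hE2 : (d ii : ℝ) * alphaf r c (i + 1) + (c ii : ℝ) * betaf r d (i + 1)
          = Eline r c d ii := Eline_succ ii
      have hE1 : Eline r c d ii = (d ii : ℝ) * alphaf r c i + (c ii : ℝ) * betaf r d i := rfl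
      nlinarith [hE2, hE1]
    have hq2 : q.2 ≤ p.2 := by
      have hcon := hp3 ii
      rw [← hEq, hq1] at hcon
      nlinarith [hcon, hci]
    refine ⟨ii, q, hqseg, (0, p.2 - q.2), le_rfl, by simpa using hq2, ?_⟩
    apply Prod.ext
    · show p.1 = q.1 + 0
      rw [hq1, add_zero]
    · show p.2 = q.2 + (p.2 - q.2)
      ring
  · set ii : Fin r := ⟨r - 1, by omega⟩ with hii
    have hlast : (ii : ℕ) + 1 = r := by
      simp only [hii]
      omega
    refine ⟨ii, vtx r c d r, ?_, (p.1 - alphaf r c r, p.2),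
      by show (0:ℝ) ≤ p.1 - alphaf r c r; linarith, hp2, ?_⟩
    · rw [hlast]
      exact right_mem_segment ℝ _ _
    · apply Prod.ext
      · show p.1 = alphaf r c r + (p.1 - alphaf r c r)
        ring
      · show p.2 = betaf r d r + p.2
        rw [betaf_last, zero_add]

end Geo2


section Geo3
variable (r : ℕ) (c d : Fin r → ℕ)

def Face (j : Fin r) : Set (ℝ × ℝ) :=
  {p | p ∈ Hset r c d ∧ (d j : ℝ) * p.1 + (c j : ℝ) * p.2 = Eline r c d j}

variable {r c d}

lemma face_extreme (j : Fin r) : IsExtreme ℝ (Hset r c d) (Face r c d j) := by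
  constructor
  · exact fun p hp => hp.1
  · rintro x1 hx1 x2 hx2 x ⟨hxH, hxE⟩ ⟨a, b, ha, hb, hab, rfl⟩
    have e1 : (a • x1 + b • x2).1 = a * x1.1 + b * x2.1 := rfl
    have e2 : (a • x1 + b • x2).2 = a * x1.2 + b * x2.2 := rfl
    rw [e1, e2] at hxE
    have hA := hx1.2.2 j
    have hB := hx2.2.2 j
    have key : a * ((d j : ℝ) * x1.1 + (c j : ℝ) * x1.2 - Eline r c d j)
        + b * ((d j : ℝ) * x2.1 + (c j : ℝ) * x2.2 - Eline r c d j) = 0 := by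
      linear_combination hxE - Eline r c d j * hab
    exact ⟨hx1, by nlinarith [key, hA, hB]⟩

lemma Eline_nonneg (j : Fin r) : 0 ≤ Eline r c d j := by
  have h1 := alphaf_nonneg (r := r) (c := c) (j : ℕ)
  have h2 := betaf_nonneg (r := r) (d := d) (j : ℕ)
  have h3 : (0:ℝ) ≤ (d j : ℝ) := Nat.cast_nonneg _
  have h4 : (0:ℝ) ≤ (c j : ℝ) := Nat.cast_nonneg _
  rw [Eline]
  positivity

lemma face_closed (j : Fin r) : IsClosed (Face r c d j) := by
  have : Face r c d j = Hset r c d ∩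
      {p : ℝ × ℝ | (d j : ℝ) * p.1 + (c j : ℝ) * p.2 = Eline r c d j} := rfl
  rw [this]
  exact closed_H.inter (isClosed_eq
    ((continuous_const.mul continuous_fst).add (continuous_const.mul continuous_snd))
    continuous_const)

lemma face_compact (hc : ∀ i, 0 < c i) (hd : ∀ i, 0 < d i) (j : Fin r) :
    IsCompact (Face r c d j) := by
  have hdj : (0:ℝ) < (d j : ℝ) := by exact_mod_cast hd j
  have hcj : (0:ℝ) < (c j : ℝ) := by exact_mod_cast hc j
  apply IsCompact.of_isClosed_subset
    ((isCompact_Icc (a := (0:ℝ)) (b := Eline r c d j / (d j : ℝ))).prod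
      (isCompact_Icc (a := (0:ℝ)) (b := Eline r c d j / (c j : ℝ))))
    (face_closed j)
  rintro p ⟨⟨hp1, hp2, _⟩, hpE⟩
  constructor
  · refine ⟨hp1, ?_⟩
    rw [le_div_iff₀ hdj]
    nlinarith [hpE, hp2, hcj]
  · refine ⟨hp2, ?_⟩
    rw [le_div_iff₀ hcj]
    nlinarith [hpE, hp1, hdj]

lemma face_subset_segments (hr : 0 < r) (hc : ∀ i, 0 < c i) (hd : ∀ i, 0 < d i)
    (hsort : ∀ i j : Fin r, i ≤ j → d j * c i ≤ d i * c j) (j : Fin r) :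
    Face r c d j ⊆ ⋃ i : Fin r, segment ℝ (vtx r c d i) (vtx r c d ((i : ℕ) + 1)) := by
  rintro p ⟨hpH, hpE⟩
  obtain ⟨i, q, hqseg, sh, hs1, hs2, rfl⟩ := decomp hr hc hpH
  have hqH : q ∈ Hset r c d := segment_subset_H hsort i.isLt.le (by omega) hqseg
  have hgeq := hqH.2.2 j
  have e1 : (q + sh).1 = q.1 + sh.1 := rfl
  have e2 : (q + sh).2 = q.2 + sh.2 := rfl
  rw [e1, e2] at hpE
  have hdj : (0:ℝ) < (d j : ℝ) := by exact_mod_cast hd j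
  have hcj : (0:ℝ) < (c j : ℝ) := by exact_mod_cast hc j
  have hz : sh.1 = 0 ∧ sh.2 = 0 := by
    constructor <;> nlinarith [hpE, hgeq, hs1, hs2, hdj, hcj]
  have : q + sh = q := by
    apply Prod.ext
    · rw [e1, hz.1, add_zero]
    · rw [e2, hz.2, add_zero]
  rw [this]
  exact Set.mem_iUnion.mpr ⟨i, hqseg⟩

lemma segments_subset_face (hsort : ∀ i j : Fin r, i ≤ j → d j * c i ≤ d i * c j) (i : Fin r) :
    segment ℝ (vtx r c d i) (vtx r c d ((i : ℕ) + 1)) ⊆ Face r c d i := by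
  intro p hp
  refine ⟨segment_subset_H hsort i.isLt.le (by omega) hp, ?_⟩
  obtain ⟨a, b, ha, hb, hab, rfl⟩ := hp
  have h1 : (d i : ℝ) * (vtx r c d i).1 + (c i : ℝ) * (vtx r c d i).2 = Eline r c d i := rfl
  have h2 : (d i : ℝ) * (vtx r c d ((i : ℕ) + 1)).1 + (c i : ℝ) * (vtx r c d ((i : ℕ) + 1)).2
      = Eline r c d i := Eline_succ i
  have e1 : (a • vtx r c d ↑i + b • vtx r c d (↑i + 1)).1
      = a * (vtx r c d ↑i).1 + b * (vtx r c d (↑i + 1)).1 := rfl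
  have e2 : (a • vtx r c d ↑i + b • vtx r c d (↑i + 1)).2
      = a * (vtx r c d ↑i).2 + b * (vtx r c d (↑i + 1)).2 := rfl
  rw [e1, e2]
  linear_combination a * h1 + b * h2 + Eline r c d i * hab

end Geo3


section Geo4
variable {r : ℕ} {c d : Fin r → ℕ}

theorem boundary_Hset (hr : 0 < r) (hc : ∀ i, 0 < c i) (hd : ∀ i, 0 < d i)
    (hsort : ∀ i j : Fin r, i ≤ j → d j * c i ≤ d i * c j) :
    ⋃₀ {F : Set (ℝ × ℝ) | IsExtreme ℝ (Hset r c d) F ∧ IsCompact F}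
      = ⋃ i : Fin r, segment ℝ (vtx r c d i) (vtx r c d ((i : ℕ) + 1)) := by
  apply Set.Subset.antisymm
  · rintro p ⟨F, ⟨hFx, hFc⟩, hpF⟩
    have hpH : p ∈ Hset r c d := hFx.1 hpF
    by_cases hE : ∃ j : Fin r, (d j : ℝ) * p.1 + (c j : ℝ) * p.2 = Eline r c d j
    · obtain ⟨j, hj⟩ := hE
      exact face_subset_segments hr hc hd hsort j ⟨hpH, hj⟩
    exfalso
    push_neg at hE
    have hstrict : ∀ j : Fin r, Eline r c d j < (d j : ℝ) * p.1 + (c j : ℝ) * p.2 :=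
      fun j => lt_of_le_of_ne (hpH.2.2 j) (Ne.symm (hE j))
    have hdpos : ∀ j : Fin r, (0:ℝ) < (d j : ℝ) := fun j => by exact_mod_cast hd j
    have hcpos : ∀ j : Fin r, (0:ℝ) < (c j : ℝ) := fun j => by exact_mod_cast hc j
    have hp0 : ¬ (p.1 = 0 ∧ p.2 = 0) := by
      rintro ⟨h1, h2⟩
      have := hstrict ⟨0, hr⟩
      rw [h1, h2] at this
      have := Eline_nonneg (c := c) (d := d) ⟨0, hr⟩
      simp at *
      linarith
    set v : ℝ × ℝ := (if p.1 = 0 then 0 else 1, if p.2 = 0 then 0 else 1) with hv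
    have hv1 : 0 ≤ v.1 ∧ v.1 ≤ 1 := by
      simp only [hv]
      split_ifs <;> norm_num
    have hv2 : 0 ≤ v.2 ∧ v.2 ≤ 1 := by
      simp only [hv]
      split_ifs <;> norm_num
    have hne : (Finset.univ : Finset (Fin r)).Nonempty := ⟨⟨0, hr⟩, Finset.mem_univ _⟩
    set g : Fin r → ℝ := fun j =>
      ((d j : ℝ) * p.1 + (c j : ℝ) * p.2 - Eline r c d j) / ((d j : ℝ) + (c j : ℝ)) with hg
    have hgpos : ∀ j, 0 < g j := fun j =>
      div_pos (by linarith [hstrict j]) (by linarith [hdpos j, hcpos j])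
    set ε : ℝ := min (Finset.univ.inf' hne g)
      (min (if p.1 = 0 then 1 else p.1) (if p.2 = 0 then 1 else p.2)) with hε
    have haux : ∀ x : ℝ, 0 ≤ x → 0 < (if x = 0 then 1 else x) := by
      intro x hx
      split_ifs with h
      · norm_num
      · exact lt_of_le_of_ne hx (Ne.symm h)
    have hεpos : 0 < ε := by
      refine lt_min ?_ (lt_min (haux _ hpH.1) (haux _ hpH.2.1))
      rw [Finset.lt_inf'_iff]
      exact fun j _ => hgpos j
    have hq1H : p - ε • v ∈ Hset r c d := by
      have e1 : (p - ε • v).1 = p.1 - ε * v.1 := rfl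
      have e2 : (p - ε • v).2 = p.2 - ε * v.2 := rfl
      refine ⟨?_, ?_, ?_⟩
      · rw [e1]
        by_cases h1 : p.1 = 0
        · have hv1' : v.1 = 0 := by simp [hv, h1]
          rw [hv1', mul_zero, sub_zero, h1]
        · have hεle : ε ≤ p.1 := by
            calc ε ≤ min (if p.1 = 0 then 1 else p.1) (if p.2 = 0 then 1 else p.2) :=
                  min_le_right _ _
            _ ≤ (if p.1 = 0 then 1 else p.1) := min_le_left _ _
            _ = p.1 := if_neg h1
          nlinarith [hv1.1, hv1.2, hεpos]
      · rw [e2]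
        by_cases h2 : p.2 = 0
        · have hv2' : v.2 = 0 := by simp [hv, h2]
          rw [hv2', mul_zero, sub_zero, h2]
        · have hεle : ε ≤ p.2 := by
            calc ε ≤ min (if p.1 = 0 then 1 else p.1) (if p.2 = 0 then 1 else p.2) :=
                  min_le_right _ _
            _ ≤ (if p.2 = 0 then 1 else p.2) := min_le_right _ _
            _ = p.2 := if_neg h2
          nlinarith [hv2.1, hv2.2, hεpos]
      · intro j
        rw [e1, e2]
        have hdc : (0:ℝ) < (d j : ℝ) + (c j : ℝ) := by linarith [hdpos j, hcpos j]
        have hεg : ε * ((d j : ℝ) + (c j : ℝ))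
            ≤ (d j : ℝ) * p.1 + (c j : ℝ) * p.2 - Eline r c d j := by
          have h1 : ε ≤ g j :=
            le_trans (min_le_left _ _) (Finset.inf'_le _ (Finset.mem_univ j))
          calc ε * ((d j : ℝ) + (c j : ℝ)) ≤ g j * ((d j : ℝ) + (c j : ℝ)) := by
                nlinarith [h1, hdc]
          _ = (d j : ℝ) * p.1 + (c j : ℝ) * p.2 - Eline r c d j := by
                rw [hg]
                field_simp
        have hvsum : (d j : ℝ) * v.1 + (c j : ℝ) * v.2 ≤ (d j : ℝ) + (c j : ℝ) := by
          nlinarith [hv1.2, hv2.2, hdpos j, hcpos j]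
        have key : ε * ((d j : ℝ) * v.1 + (c j : ℝ) * v.2) ≤ ε * ((d j : ℝ) + (c j : ℝ)) :=
          mul_le_mul_of_nonneg_left hvsum hεpos.le
        nlinarith [key, hεg]
    have hTH : ∀ T : ℝ, 0 ≤ T → p + T • v ∈ Hset r c d := by
      intro T hT
      have e1 : (p + T • v).1 = p.1 + T * v.1 := rfl
      have e2 : (p + T • v).2 = p.2 + T * v.2 := rfl
      refine ⟨?_, ?_, ?_⟩
      · rw [e1]
        nlinarith [hpH.1, hv1.1, hT]
      · rw [e2]
        nlinarith [hpH.2.1, hv2.1, hT]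
      · intro j
        rw [e1, e2]
        have h1 := hpH.2.2 j
        nlinarith [h1, mul_nonneg (mul_nonneg (hdpos j).le hT) hv1.1,
          mul_nonneg (mul_nonneg (hcpos j).le hT) hv2.1]
    have hmem : ∀ T : ℝ, 0 < T → p + T • v ∈ F := by
      intro T hT
      have hTε : 0 < T + ε := by linarith
      have hseg : p ∈ openSegment ℝ (p - ε • v) (p + T • v) := by
        refine ⟨T / (T + ε), ε / (T + ε), by positivity, by positivity, ?_, ?_⟩
        · field_simp
        · apply Prod.ext
          · show T / (T + ε) * (p.1 - ε * v.1) + ε / (T + ε) * (p.1 + T * v.1) = p.1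
            field_simp
            ring
          · show T / (T + ε) * (p.2 - ε * v.2) + ε / (T + ε) * (p.2 + T * v.2) = p.2
            field_simp
            ring
      exact hFx.right_mem_of_mem_openSegment hq1H (hTH T hT.le) hpF hseg
    obtain ⟨R, hR⟩ := hFc.isBounded.subset_closedBall 0
    set T : ℝ := |p.1| + |p.2| + |R| + 1 with hT
    have hTpos : 0 < T := by positivity
    have hRm := hR (hmem T hTpos)
    rw [Metric.mem_closedBall, dist_zero_right] at hRm
    rcases not_and_or.mp hp0 with h1 | h2
    · have hv1' : v.1 = 1 := by simp [hv, h1]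
      have hb : |(p + T • v).1| ≤ ‖p + T • v‖ := by
        calc |(p + T • v).1| = ‖(p + T • v).1‖ := (Real.norm_eq_abs _).symm
        _ ≤ ‖p + T • v‖ := norm_fst_le _
      have e1 : (p + T • v).1 = p.1 + T * v.1 := rfl
      rw [e1, hv1', mul_one] at hb
      have hRb : |p.1 + T| ≤ R := le_trans hb hRm
      have h3 := le_abs_self (p.1 + T)
      have h4 := neg_abs_le p.1
      have h5 := le_abs_self R
      have h6 := abs_le.mp hRb
      linarith [h6.2, h4, h5, le_abs_self R, neg_abs_le p.2, abs_nonneg p.2]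
    · have hv2' : v.2 = 1 := by simp [hv, h2]
      have hb : |(p + T • v).2| ≤ ‖p + T • v‖ := by
        calc |(p + T • v).2| = ‖(p + T • v).2‖ := (Real.norm_eq_abs _).symm
        _ ≤ ‖p + T • v‖ := norm_snd_le _
      have e2 : (p + T • v).2 = p.2 + T * v.2 := rfl
      rw [e2, hv2', mul_one] at hb
      have hRb : |p.2 + T| ≤ R := le_trans hb hRm
      have h6 := abs_le.mp hRb
      linarith [h6.2, neg_abs_le p.2, le_abs_self R, neg_abs_le p.1, abs_nonneg p.1]
  · intro p hp
    rw [Set.mem_iUnion] at hp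
    obtain ⟨i, hpi⟩ := hp
    exact ⟨Face r c d i, ⟨face_extreme i, face_compact hc hd i⟩,
      segments_subset_face hsort i hpi⟩

end Geo4


section Bridge
variable {r : ℕ} {c d : Fin r → ℕ}

lemma filter_cast_c' {t : ℕ} (ht : t ≤ r) :
    (∑ l ∈ Finset.filter (fun l : Fin r => (l : ℕ) < t) Finset.univ, (c l : ℝ))
      = alphaf r c t := by
  rw [Finset.sum_filter]
  have step : ∀ l : Fin r, (if (l : ℕ) < t then (c l : ℝ) else 0)
      = (fun n => if n < t then ext2 r c n else 0) (l : ℕ) := by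
    intro l
    by_cases h : (l : ℕ) < t
    · simp only [h, if_true]
      unfold ext2
      rw [dif_pos l.isLt, Fin.eta]
    · simp [h]
  rw [Finset.sum_congr rfl (fun l _ => step l),
    Fin.sum_univ_eq_sum_range (fun n => if n < t then ext2 r c n else 0) r, ← Finset.sum_filter]
  unfold alphaf
  congr 1
  ext n
  simp only [Finset.mem_filter, Finset.mem_range]
  omega

lemma filter_cast_d' {t : ℕ} (ht : t ≤ r) :
    (∑ l ∈ Finset.filter (fun l : Fin r => t ≤ (l : ℕ)) Finset.univ, (d l : ℝ))
      = betaf r d t := by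
  rw [Finset.sum_filter]
  have step : ∀ l : Fin r, (if t ≤ (l : ℕ) then (d l : ℝ) else 0)
      = (fun n => if t ≤ n then ext2 r d n else 0) (l : ℕ) := by
    intro l
    by_cases h : t ≤ (l : ℕ)
    · simp only [h, if_true]
      unfold ext2
      rw [dif_pos l.isLt, Fin.eta]
    · simp [h]
  rw [Finset.sum_congr rfl (fun l _ => step l),
    Fin.sum_univ_eq_sum_range (fun n => if t ≤ n then ext2 r d n else 0) r, ← Finset.sum_filter]
  unfold betaf
  congr 1
  ext n
  simp only [Finset.mem_filter, Finset.mem_range, Finset.mem_Ico]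
  omega

lemma filter_cast_c {t : ℕ} (ht : t ≤ r) :
    ((∑ l ∈ Finset.filter (fun l : Fin r => (l : ℕ) < t) Finset.univ, c l : ℕ) : ℝ)
      = alphaf r c t := by
  rw [Nat.cast_sum]
  exact filter_cast_c' ht

lemma filter_cast_d {t : ℕ} (ht : t ≤ r) :
    ((∑ l ∈ Finset.filter (fun l : Fin r => t ≤ (l : ℕ)) Finset.univ, d l : ℕ) : ℝ)
      = betaf r d t := by
  rw [Nat.cast_sum]
  exact filter_cast_d' ht

end Bridge

section MonomialSide
variable {k : Type*} [Field k] {r : ℕ} (c d : Fin r → ℕ)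

/-- The generating exponent set of `J i`. -/
def Sset (i : Fin r) : Set (Fin 2 →₀ ℕ) := {s | c i * d i ≤ wt (d i) (c i) s}

/-- The vertex exponent of the `m`-th vertex. -/
def Sexp (m : ℕ) : Fin 2 →₀ ℕ :=
  ∑ l : Fin r, (if (l : ℕ) < m then Finsupp.single (0 : Fin 2) (c l)
    else Finsupp.single (1 : Fin 2) (d l))

variable {c d}

lemma Sexp_mem (m : ℕ) : Sexp c d m ∈ ∑ i : Fin r, Sset c d i := by
  rw [Set.mem_fintype_sum]
  refine ⟨fun l => if (l : ℕ) < m then Finsupp.single (0 : Fin 2) (c l)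
    else Finsupp.single (1 : Fin 2) (d l), fun i => ?_, rfl⟩
  by_cases h : (i : ℕ) < m
  · simp only [h, if_true]
    show c i * d i ≤ wt (d i) (c i) (Finsupp.single (0 : Fin 2) (c i))
    unfold wt
    simp [Finsupp.single_apply, mul_comm]
  · simp only [h, if_false]
    show c i * d i ≤ wt (d i) (c i) (Finsupp.single (1 : Fin 2) (d i))
    unfold wt
    simp [Finsupp.single_apply]

lemma Sexp_apply0 (m : ℕ) :
    (Sexp c d m) 0 = ∑ l ∈ Finset.filter (fun l : Fin r => (l : ℕ) < m) Finset.univ, c l := by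
  unfold Sexp
  rw [Finset.sum_apply']
  rw [Finset.sum_filter]
  apply Finset.sum_congr rfl
  intro l _
  by_cases h : (l : ℕ) < m <;> simp [h, Finsupp.single_apply]

lemma Sexp_apply1 (m : ℕ) :
    (Sexp c d m) 1 = ∑ l ∈ Finset.filter (fun l : Fin r => m ≤ (l : ℕ)) Finset.univ, d l := by
  unfold Sexp
  rw [Finset.sum_apply']
  rw [Finset.sum_filter]
  apply Finset.sum_congr rfl
  intro l _
  by_cases h : (l : ℕ) < m
  · rw [if_pos h, if_neg (by omega : ¬ m ≤ (l : ℕ))]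
    simp [Finsupp.single_apply]
  · rw [if_neg h, if_pos (by omega : m ≤ (l : ℕ))]
    simp [Finsupp.single_apply]

lemma wt_lower (hc : ∀ i, 0 < c i) (hd : ∀ i, 0 < d i)
    (hsort : ∀ i j : Fin r, i ≤ j → d j * c i ≤ d i * c j) (j : Fin r) {u : Fin 2 →₀ ℕ}
    (hu : u ∈ ∑ i : Fin r, Sset c d i) :
    d j * (∑ l ∈ Finset.filter (fun l : Fin r => (l : ℕ) < (j : ℕ)) Finset.univ, c l)
      + c j * (∑ l ∈ Finset.filter (fun l : Fin r => (j : ℕ) ≤ (l : ℕ)) Finset.univ, d l)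
      ≤ d j * u 0 + c j * u 1 := by
  rw [Set.mem_fintype_sum] at hu
  obtain ⟨σ, hσ, rfl⟩ := hu
  have h0 : (∑ i : Fin r, σ i) 0 = ∑ i : Fin r, σ i 0 := by rw [Finset.sum_apply']
  have h1 : (∑ i : Fin r, σ i) 1 = ∑ i : Fin r, σ i 1 := by rw [Finset.sum_apply']
  have key : ∀ i : Fin r,
      (if (i : ℕ) < (j : ℕ) then d j * c i else c j * d i) ≤ d j * σ i 0 + c j * σ i 1 :=
    fun i => wt_cross_bound c d hc hd hsort i j (σ i) (hσ i)
  have e : (∑ i : Fin r, if (i : ℕ) < (j : ℕ) then d j * c i else c j * d i)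
      = d j * (∑ l ∈ Finset.filter (fun l : Fin r => (l : ℕ) < (j : ℕ)) Finset.univ, c l)
        + c j * (∑ l ∈ Finset.filter (fun l : Fin r => (j : ℕ) ≤ (l : ℕ)) Finset.univ, d l) := by
    rw [Finset.sum_ite, ← Finset.mul_sum, ← Finset.mul_sum,
      show Finset.filter (fun l : Fin r => ¬ (l : ℕ) < (j : ℕ)) Finset.univ
          = Finset.filter (fun l : Fin r => (j : ℕ) ≤ (l : ℕ)) Finset.univ by
        apply Finset.filter_congr; intro x _; simp [Nat.not_lt]]
  calc d j * (∑ l ∈ Finset.filter (fun l : Fin r => (l : ℕ) < (j : ℕ)) Finset.univ, c l)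
      + c j * (∑ l ∈ Finset.filter (fun l : Fin r => (j : ℕ) ≤ (l : ℕ)) Finset.univ, d l)
      = ∑ i : Fin r, (if (i : ℕ) < (j : ℕ) then d j * c i else c j * d i) := e.symm
  _ ≤ ∑ i : Fin r, (d j * σ i 0 + c j * σ i 1) := Finset.sum_le_sum fun i _ => key i
  _ = d j * (∑ i : Fin r, σ i 0) + c j * (∑ i : Fin r, σ i 1) := by
        rw [Finset.sum_add_distrib, ← Finset.mul_sum, ← Finset.mul_sum]
  _ = d j * (∑ i : Fin r, σ i) 0 + c j * (∑ i : Fin r, σ i) 1 := by rw [h0, h1]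

end MonomialSide


section Main
variable {k : Type*} [Field k] {r : ℕ} {c d : Fin r → ℕ}

def Pts (I : Ideal (MvPolynomial (Fin 2) k)) : Set (ℝ × ℝ) :=
  {p : ℝ × ℝ |
    ∃ s : Fin 2 →₀ ℕ, (MvPolynomial.monomial s (1 : k)) ∈ I ∧ p = ((s 0 : ℝ), (s 1 : ℝ))}

variable {I : Ideal (MvPolynomial (Fin 2) k)} {J : Fin r → Ideal (MvPolynomial (Fin 2) k)}

lemma I_eq (hc : ∀ i, 0 < c i) (hd : ∀ i, 0 < d i)
    (hJ : ∀ i, IsIntegralClosureOfIdeal (J i)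
      (Ideal.span {(MvPolynomial.X 0 : MvPolynomial (Fin 2) k) ^ c i, MvPolynomial.X 1 ^ d i}))
    (hI : I = ∏ i, J i) :
    I = Ideal.span ((fun s => MvPolynomial.monomial s (1 : k)) '' (∑ i : Fin r, Sset c d i)) := by
  rw [hI]
  have hJe : ∀ i, J i = Ideal.span
      ((fun s => MvPolynomial.monomial s (1 : k)) '' Sset c d i) :=
    fun i => J_eq (hc i) (hd i) (hJ i)
  rw [Finset.prod_congr rfl (fun i _ => hJe i), prod_span_mono]

lemma mono_mem (hc : ∀ i, 0 < c i) (hd : ∀ i, 0 < d i)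
    (hJ : ∀ i, IsIntegralClosureOfIdeal (J i)
      (Ideal.span {(MvPolynomial.X 0 : MvPolynomial (Fin 2) k) ^ c i, MvPolynomial.X 1 ^ d i}))
    (hI : I = ∏ i, J i) {s : Fin 2 →₀ ℕ} :
    MvPolynomial.monomial s (1 : k) ∈ I ↔ ∃ u ∈ ∑ i : Fin r, Sset c d i, u ≤ s := by
  rw [I_eq hc hd hJ hI, MvPolynomial.mem_ideal_span_monomial_image]
  simp [MvPolynomial.support_monomial]

lemma corner_mem (hc : ∀ i, 0 < c i) (hd : ∀ i, 0 < d i)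
    (hJ : ∀ i, IsIntegralClosureOfIdeal (J i)
      (Ideal.span {(MvPolynomial.X 0 : MvPolynomial (Fin 2) k) ^ c i, MvPolynomial.X 1 ^ d i}))
    (hI : I = ∏ i, J i) (m u' v' : ℕ) :
    MvPolynomial.monomial (Sexp c d m + Finsupp.single (0 : Fin 2) u'
      + Finsupp.single (1 : Fin 2) v') (1 : k) ∈ I := by
  refine (mono_mem hc hd hJ hI).mpr ⟨Sexp c d m, Sexp_mem m, ?_⟩
  rw [Finsupp.le_def]
  intro a
  simp only [Finsupp.add_apply]
  omega

lemma corner_pt (hc : ∀ i, 0 < c i) (hd : ∀ i, 0 < d i)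
    (hJ : ∀ i, IsIntegralClosureOfIdeal (J i)
      (Ideal.span {(MvPolynomial.X 0 : MvPolynomial (Fin 2) k) ^ c i, MvPolynomial.X 1 ^ d i}))
    (hI : I = ∏ i, J i) {m : ℕ} (hm : m ≤ r) (u' v' : ℕ) :
    ((alphaf r c m + (u' : ℝ), betaf r d m + (v' : ℝ))) ∈ Pts I := by
  refine ⟨Sexp c d m + Finsupp.single (0 : Fin 2) u' + Finsupp.single (1 : Fin 2) v',
    corner_mem hc hd hJ hI m u' v', ?_⟩
  have h0 : ((Sexp c d m + Finsupp.single (0 : Fin 2) u' + Finsupp.single (1 : Fin 2) v') 0 : ℝ)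
      = alphaf r c m + (u' : ℝ) := by
    rw [Finsupp.add_apply, Finsupp.add_apply, Sexp_apply0]
    rw [Finsupp.single_apply, Finsupp.single_apply]
    norm_num
    push_cast
    rw [filter_cast_c' hm]
  have h1 : ((Sexp c d m + Finsupp.single (0 : Fin 2) u' + Finsupp.single (1 : Fin 2) v') 1 : ℝ)
      = betaf r d m + (v' : ℝ) := by
    rw [Finsupp.add_apply, Finsupp.add_apply, Sexp_apply1]
    rw [Finsupp.single_apply, Finsupp.single_apply]
    norm_num
    push_cast
    rw [filter_cast_d' hm]
  rw [Prod.mk.injEq]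
  exact ⟨h0.symm, h1.symm⟩

lemma shift_mem_hull (hc : ∀ i, 0 < c i) (hd : ∀ i, 0 < d i)
    (hJ : ∀ i, IsIntegralClosureOfIdeal (J i)
      (Ideal.span {(MvPolynomial.X 0 : MvPolynomial (Fin 2) k) ^ c i, MvPolynomial.X 1 ^ d i}))
    (hI : I = ∏ i, J i) {m : ℕ} (hm : m ≤ r) {s t : ℝ} (hs : 0 ≤ s) (ht : 0 ≤ t) :
    ((alphaf r c m + s, betaf r d m + t)) ∈ convexHull ℝ (Pts I) := by
  have corner : ∀ a b : ℕ, ((alphaf r c m + (a : ℝ), betaf r d m + (b : ℝ)))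
      ∈ convexHull ℝ (Pts I) :=
    fun a b => subset_convexHull ℝ _ (corner_pt hc hd hJ hI hm a b)
  have vert : ∀ a : ℕ, ((alphaf r c m + (a : ℝ), betaf r d m + t)) ∈ convexHull ℝ (Pts I) := by
    intro a
    have h1 : (⌊t⌋₊ : ℝ) ≤ t := Nat.floor_le ht
    have h2 : t < (⌊t⌋₊ : ℝ) + 1 := Nat.lt_floor_add_one t
    have hmem := mem_segment_param (u := (alphaf r c m + (a : ℝ), betaf r d m + (⌊t⌋₊ : ℝ)))
      (v := (alphaf r c m + (a : ℝ), betaf r d m + ((⌊t⌋₊ : ℝ) + 1)))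
      (t := t - (⌊t⌋₊ : ℝ)) (by linarith) (by linarith)
    have heq : ((1 - (t - (⌊t⌋₊ : ℝ))) * (alphaf r c m + (a : ℝ), betaf r d m + (⌊t⌋₊ : ℝ)).1
        + (t - (⌊t⌋₊ : ℝ)) * (alphaf r c m + (a : ℝ), betaf r d m + ((⌊t⌋₊ : ℝ) + 1)).1,
        (1 - (t - (⌊t⌋₊ : ℝ))) * (alphaf r c m + (a : ℝ), betaf r d m + (⌊t⌋₊ : ℝ)).2
        + (t - (⌊t⌋₊ : ℝ)) * (alphaf r c m + (a : ℝ), betaf r d m + ((⌊t⌋₊ : ℝ) + 1)).2)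
        = ((alphaf r c m + (a : ℝ), betaf r d m + t)) := by
      rw [Prod.mk.injEq]
      constructor <;> · show _ = _; ring
    rw [heq] at hmem
    have hcb : ((alphaf r c m + (a : ℝ), betaf r d m + ((⌊t⌋₊ : ℝ) + 1)))
        ∈ convexHull ℝ (Pts I) := by
      have := corner a (⌊t⌋₊ + 1)
      push_cast at this
      exact this
    exact (convex_convexHull ℝ (Pts I)).segment_subset (corner a ⌊t⌋₊) hcb hmem
  have h1 : (⌊s⌋₊ : ℝ) ≤ s := Nat.floor_le hs
  have h2 : s < (⌊s⌋₊ : ℝ) + 1 := Nat.lt_floor_add_one s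
  have hmem := mem_segment_param (u := (alphaf r c m + (⌊s⌋₊ : ℝ), betaf r d m + t))
    (v := (alphaf r c m + ((⌊s⌋₊ : ℝ) + 1), betaf r d m + t))
    (t := s - (⌊s⌋₊ : ℝ)) (by linarith) (by linarith)
  have heq : ((1 - (s - (⌊s⌋₊ : ℝ))) * (alphaf r c m + (⌊s⌋₊ : ℝ), betaf r d m + t).1
      + (s - (⌊s⌋₊ : ℝ)) * (alphaf r c m + ((⌊s⌋₊ : ℝ) + 1), betaf r d m + t).1,
      (1 - (s - (⌊s⌋₊ : ℝ))) * (alphaf r c m + (⌊s⌋₊ : ℝ), betaf r d m + t).2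
      + (s - (⌊s⌋₊ : ℝ)) * (alphaf r c m + ((⌊s⌋₊ : ℝ) + 1), betaf r d m + t).2)
      = ((alphaf r c m + s, betaf r d m + t)) := by
    rw [Prod.mk.injEq]
    constructor <;> · show _ = _; ring
  rw [heq] at hmem
  have hvb : ((alphaf r c m + ((⌊s⌋₊ : ℝ) + 1), betaf r d m + t)) ∈ convexHull ℝ (Pts I) := by
    have := vert (⌊s⌋₊ + 1)
    push_cast at this
    exact this
  exact (convex_convexHull ℝ (Pts I)).segment_subset (vert ⌊s⌋₊) hvb hmem

theorem hull_eq_Hset (hr : 0 < r) (hc : ∀ i, 0 < c i) (hd : ∀ i, 0 < d i)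
    (hsort : ∀ i j : Fin r, i ≤ j → d j * c i ≤ d i * c j)
    (hJ : ∀ i, IsIntegralClosureOfIdeal (J i)
      (Ideal.span {(MvPolynomial.X 0 : MvPolynomial (Fin 2) k) ^ c i, MvPolynomial.X 1 ^ d i}))
    (hI : I = ∏ i, J i) :
    convexHull ℝ (Pts I) = Hset r c d := by
  apply Set.Subset.antisymm
  · apply convexHull_min _ convex_H
    rintro p ⟨s, hsI, rfl⟩
    refine ⟨Nat.cast_nonneg _, Nat.cast_nonneg _, fun j => ?_⟩
    obtain ⟨u, hu, hle⟩ := (mono_mem hc hd hJ hI).mp hsI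
    have h1 := wt_lower hc hd hsort j hu
    have h2 : d j * u 0 + c j * u 1 ≤ d j * s 0 + c j * s 1 :=
      Nat.add_le_add (Nat.mul_le_mul_left _ (Finsupp.le_def.mp hle 0))
        (Nat.mul_le_mul_left _ (Finsupp.le_def.mp hle 1))
    have hcast : (((d j * (∑ l ∈ Finset.filter (fun l : Fin r => (l : ℕ) < (j : ℕ)) Finset.univ, c l)
          + c j * (∑ l ∈ Finset.filter (fun l : Fin r => (j : ℕ) ≤ (l : ℕ)) Finset.univ, d l) : ℕ)) : ℝ)
        ≤ ((d j * s 0 + c j * s 1 : ℕ) : ℝ) := Nat.cast_le.mpr (le_trans h1 h2)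
    push_cast at hcast
    rw [filter_cast_c' (le_of_lt j.isLt), filter_cast_d' (le_of_lt j.isLt)] at hcast
    rw [Eline]
    linarith [hcast]
  · intro p hp
    obtain ⟨i, q, hqseg, sh, hs1, hs2, rfl⟩ := decomp hr hc hp
    have hA : vtx r c d (i : ℕ) + sh ∈ convexHull ℝ (Pts I) :=
      shift_mem_hull hc hd hJ hI i.isLt.le hs1 hs2
    have hB : vtx r c d ((i : ℕ) + 1) + sh ∈ convexHull ℝ (Pts I) :=
      shift_mem_hull hc hd hJ hI (by omega) hs1 hs2
    exact (convex_convexHull ℝ (Pts I)).segment_subset hA hB (segment_translate hqseg)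

end Main


end NewtonAux

/-- **Remark 1.3.** If `I = J₁ ⋯ J_r` with `J_i` the integral closure of `(x^{c_i}, y^{d_i})`
and `d₁/c₁ ≥ ⋯ ≥ d_r/c_r`, then, with `a_i = c₁ + ⋯ + c_{i-1}` and `b_i = d_i + ⋯ + d_r`,
the Newton boundary of `I` is `B(I) = L₁ ∪ ⋯ ∪ L_r` where `L_i` is the segment joining
`(a_i, b_i)` to `(a_{i+1}, b_{i+1})`. -/
theorem newton_boundary_as_union_of_segments {k : Type*} [Field k] (r : ℕ) (hr : 0 < r)
    (c d : Fin r → ℕ) (hc : ∀ i, 0 < c i) (hd : ∀ i, 0 < d i)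
    (hsort : ∀ i j : Fin r, i ≤ j → d j * c i ≤ d i * c j)
    (J : Fin r → Ideal (MvPolynomial (Fin 2) k))
    (hJ : ∀ i, IsIntegralClosureOfIdeal (J i)
      (Ideal.span {(X 0 : MvPolynomial (Fin 2) k) ^ c i, X 1 ^ d i}))
    (I : Ideal (MvPolynomial (Fin 2) k)) (hI : I = ∏ i, J i)
    (a b : Fin (r + 1) → ℕ)
    (ha : ∀ t, a t = ∑ j ∈ Finset.univ.filter (fun j : Fin r => (j : ℕ) < (t : ℕ)), c j)
    (hb : ∀ t, b t = ∑ j ∈ Finset.univ.filter (fun j : Fin r => (t : ℕ) ≤ (j : ℕ)), d j) :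
    newtonBoundary I = ⋃ i : Fin r,
      segment ℝ (((a i.castSucc : ℝ), (b i.castSucc : ℝ)))
        (((a i.succ : ℝ), (b i.succ : ℝ))) := by
  have hNewton : newton I = NewtonAux.Hset r c d := by
    have h0 : newton I = convexHull ℝ (NewtonAux.Pts I) := rfl
    rw [h0, NewtonAux.hull_eq_Hset hr hc hd hsort hJ hI]
  rw [newtonBoundary, hNewton, NewtonAux.boundary_Hset hr hc hd hsort]
  apply Set.iUnion_congr
  intro i
  have ea : ((a i.castSucc : ℕ) : ℝ) = NewtonAux.alphaf r c (i : ℕ) := by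
    rw [ha i.castSucc]
    simp only [Fin.coe_castSucc]
    exact NewtonAux.filter_cast_c (le_of_lt i.isLt)
  have eb : ((b i.castSucc : ℕ) : ℝ) = NewtonAux.betaf r d (i : ℕ) := by
    rw [hb i.castSucc]
    simp only [Fin.coe_castSucc]
    exact NewtonAux.filter_cast_d (le_of_lt i.isLt)
  have ea' : ((a i.succ : ℕ) : ℝ) = NewtonAux.alphaf r c ((i : ℕ) + 1) := by
    rw [ha i.succ]
    simp only [Fin.val_succ]
    exact NewtonAux.filter_cast_c (by omega)
  have eb' : ((b i.succ : ℕ) : ℝ) = NewtonAux.betaf r d ((i : ℕ) + 1) := by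
    rw [hb i.succ]
    simp only [Fin.val_succ]
    exact NewtonAux.filter_cast_d (by omega)
  have e1 : ((a i.castSucc : ℝ), (b i.castSucc : ℝ)) = NewtonAux.vtx r c d (i : ℕ) := by
    rw [Prod.mk.injEq]
    exact ⟨ea, eb⟩
  have e2 : ((a i.succ : ℝ), (b i.succ : ℝ)) = NewtonAux.vtx r c d ((i : ℕ) + 1) := by
    rw [Prod.mk.injEq]
    exact ⟨ea', eb'⟩
  rw [e1, e2]
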